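/- For every τ in the upper half-plane ℍ, with all theta constants evaluated at (0,τ): θ[1;0]²·θ[1;1/4]·θ[1;3/4] - θ[1;1/4]²·θ[1;1/2]² + θ[1;1/2]²·θ[1;3/4]² = 0. -/
import Mathlib


open Complex

/-- The theta function with characteristics `θ[ε; ε'](ζ, τ)`. -/
noncomputable def thetaChar (e e' : ℝ) (z τ : ℂ) : ℂ :=
  ∑' n : ℤ, Complex.exp (2 * Real.pi * I *
    ((1/2) * ((n : ℂ) + (e : ℂ)/2)^2 * τ + ((n : ℂ) + (e : ℂ)/2) * (z + (e' : ℂ)/2)))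

/-- The derivative theta constant `θ'[ε; ε'](0, τ) = ∂θ[ε;ε'](ζ,τ)/∂ζ |_{ζ=0}`. -/
noncomputable def thetaCharDeriv (e e' : ℝ) (τ : ℂ) : ℂ :=
  deriv (fun z => thetaChar e e' z τ) 0

namespace ThetaAux

open Real in
/-- term of `thetaChar 1 x 0 σ` -/
noncomputable def tc1 (σ : ℂ) (x : ℝ) (n : ℤ) : ℂ :=
  Complex.exp (2 * Real.pi * I *
    ((1/2) * ((n : ℂ) + (1 : ℝ)/2)^2 * σ + ((n : ℂ) + (1 : ℝ)/2) * ((0 : ℂ) + (x : ℂ)/2)))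

/-- term of `thetaChar 0 x 0 σ` -/
noncomputable def tc0 (σ : ℂ) (x : ℝ) (n : ℤ) : ℂ :=
  Complex.exp (2 * Real.pi * I *
    ((1/2) * ((n : ℂ) + (0 : ℝ)/2)^2 * σ + ((n : ℂ) + (0 : ℝ)/2) * ((0 : ℂ) + (x : ℂ)/2)))

lemma thetaChar1_eq (σ : ℂ) (x : ℝ) : thetaChar 1 x 0 σ = ∑' n : ℤ, tc1 σ x n := by
  unfold thetaChar tc1
  norm_num

lemma thetaChar0_eq (σ : ℂ) (x : ℝ) : thetaChar 0 x 0 σ = ∑' n : ℤ, tc0 σ x n := by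
  unfold thetaChar tc0
  norm_num

lemma tc1_eq_jacobi (σ : ℂ) (x : ℝ) (n : ℤ) :
    tc1 σ x n = Complex.exp ((Real.pi : ℂ) * I * (σ + 2*x) / 4) *
      jacobiTheta₂_term n ((x + σ)/2) σ := by
  unfold tc1 jacobiTheta₂_term
  rw [← Complex.exp_add]
  congr 1
  push_cast
  ring

lemma tc0_eq_jacobi (σ : ℂ) (x : ℝ) (n : ℤ) :
    tc0 σ x n = jacobiTheta₂_term n ((x : ℂ)/2) σ := by
  unfold tc0 jacobiTheta₂_term
  congr 1
  push_cast
  ring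

lemma summable_tc1 {σ : ℂ} (hσ : 0 < σ.im) (x : ℝ) : Summable (tc1 σ x) := by
  have : tc1 σ x = fun n => Complex.exp ((Real.pi : ℂ) * I * (σ + 2*x) / 4) *
      jacobiTheta₂_term n ((x + σ)/2) σ := funext fun n => tc1_eq_jacobi σ x n
  rw [this]
  exact ((summable_jacobiTheta₂_term_iff _ _).mpr hσ).mul_left _

lemma summable_tc0 {σ : ℂ} (hσ : 0 < σ.im) (x : ℝ) : Summable (tc0 σ x) := by
  have : tc0 σ x = fun n => jacobiTheta₂_term n ((x : ℂ)/2) σ :=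
    funext fun n => tc0_eq_jacobi σ x n
  rw [this]
  exact (summable_jacobiTheta₂_term_iff _ _).mpr hσ

def negOneSub : ℤ ≃ ℤ := ⟨fun n => -1 - n, fun n => -1 - n, fun n => by ring, fun n => by ring⟩

/-- F is even. -/
lemma theta1_neg (σ : ℂ) (x : ℝ) : thetaChar 1 (-x) 0 σ = thetaChar 1 x 0 σ := by
  unfold thetaChar
  rw [← negOneSub.tsum_eq (fun n : ℤ => Complex.exp (2 * Real.pi * I *
    ((1/2) * ((n : ℂ) + ((1:ℝ) : ℂ)/2)^2 * σ + ((n : ℂ) + ((1:ℝ) : ℂ)/2) * (0 + ((x:ℝ) : ℂ)/2))))]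
  refine tsum_congr fun n => ?_
  show _ = Complex.exp (2 * Real.pi * I *
    ((1/2) * (((-1 - n : ℤ) : ℂ) + ((1:ℝ):ℂ)/2)^2 * σ +
      (((-1 - n : ℤ) : ℂ) + ((1:ℝ):ℂ)/2) * (0 + ((x:ℝ):ℂ)/2)))
  congr 1
  push_cast
  ring

/-- G is even. -/
lemma theta0_neg (σ : ℂ) (x : ℝ) : thetaChar 0 (-x) 0 σ = thetaChar 0 x 0 σ := by
  unfold thetaChar
  rw [← (Equiv.neg ℤ).tsum_eq (fun n : ℤ => Complex.exp (2 * Real.pi * I *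
    ((1/2) * ((n : ℂ) + ((0:ℝ) : ℂ)/2)^2 * σ + ((n : ℂ) + ((0:ℝ) : ℂ)/2) * (0 + ((x:ℝ) : ℂ)/2))))]
  refine tsum_congr fun n => ?_
  show _ = Complex.exp (2 * Real.pi * I *
    ((1/2) * (((-n : ℤ) : ℂ) + ((0:ℝ):ℂ)/2)^2 * σ +
      (((-n : ℤ) : ℂ) + ((0:ℝ):ℂ)/2) * (0 + ((x:ℝ):ℂ)/2)))
  congr 1
  push_cast
  ring

/-- F has anti-period 2. -/
lemma theta1_add_two (σ : ℂ) (x : ℝ) :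
    thetaChar 1 (x + 2) 0 σ = -thetaChar 1 x 0 σ := by
  unfold thetaChar
  rw [← tsum_neg]
  refine tsum_congr fun n => ?_
  have h : 2 * (Real.pi : ℂ) * I *
      ((1/2) * ((n : ℂ) + ((1:ℝ):ℂ)/2)^2 * σ + ((n : ℂ) + ((1:ℝ):ℂ)/2) * (0 + (((x+2:ℝ)):ℂ)/2))
      = 2 * (Real.pi : ℂ) * I *
      ((1/2) * ((n : ℂ) + ((1:ℝ):ℂ)/2)^2 * σ + ((n : ℂ) + ((1:ℝ):ℂ)/2) * (0 + ((x:ℝ):ℂ)/2))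
      + (n : ℂ) * (2 * Real.pi * I) + Real.pi * I := by
    push_cast
    ring
  rw [h, Complex.exp_add, Complex.exp_add, Complex.exp_int_mul_two_pi_mul_I,
    Complex.exp_pi_mul_I]
  ring

/-- G has period 2. -/
lemma theta0_add_two (σ : ℂ) (x : ℝ) :
    thetaChar 0 (x + 2) 0 σ = thetaChar 0 x 0 σ := by
  unfold thetaChar
  refine tsum_congr fun n => ?_
  have h : 2 * (Real.pi : ℂ) * I *
      ((1/2) * ((n : ℂ) + ((0:ℝ):ℂ)/2)^2 * σ + ((n : ℂ) + ((0:ℝ):ℂ)/2) * (0 + (((x+2:ℝ)):ℂ)/2))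
      = 2 * (Real.pi : ℂ) * I *
      ((1/2) * ((n : ℂ) + ((0:ℝ):ℂ)/2)^2 * σ + ((n : ℂ) + ((0:ℝ):ℂ)/2) * (0 + ((x:ℝ):ℂ)/2))
      + (n : ℂ) * (2 * Real.pi * I) := by
    push_cast
    ring
  rw [h, Complex.exp_add, Complex.exp_int_mul_two_pi_mul_I, mul_one]

/-- θ[1;1](0,σ) = 0. -/
lemma theta1_one (σ : ℂ) : thetaChar 1 1 0 σ = 0 := by
  have key : thetaChar 1 1 0 σ = -thetaChar 1 1 0 σ := by
    unfold thetaChar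
    rw [← tsum_neg]
    nth_rewrite 1 [← negOneSub.tsum_eq (fun n : ℤ => Complex.exp (2 * Real.pi * I *
      ((1/2) * ((n : ℂ) + ((1:ℝ):ℂ)/2)^2 * σ + ((n : ℂ) + ((1:ℝ):ℂ)/2) * (0 + ((1:ℝ):ℂ)/2))))]
    refine tsum_congr fun n => ?_
    show Complex.exp (2 * Real.pi * I *
      ((1/2) * (((-1 - n : ℤ) : ℂ) + ((1:ℝ):ℂ)/2)^2 * σ +
        (((-1 - n : ℤ) : ℂ) + ((1:ℝ):ℂ)/2) * (0 + ((1:ℝ):ℂ)/2))) = _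
    have h : 2 * (Real.pi : ℂ) * I *
        ((1/2) * (((-1 - n : ℤ) : ℂ) + ((1:ℝ):ℂ)/2)^2 * σ +
          (((-1 - n : ℤ) : ℂ) + ((1:ℝ):ℂ)/2) * (0 + ((1:ℝ):ℂ)/2))
        = 2 * (Real.pi : ℂ) * I *
        ((1/2) * ((n : ℂ) + ((1:ℝ):ℂ)/2)^2 * σ + ((n : ℂ) + ((1:ℝ):ℂ)/2) * (0 + ((1:ℝ):ℂ)/2))
        + ((-n - 1 : ℤ) : ℂ) * (2 * Real.pi * I) + Real.pi * I := by
      push_cast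
      ring
    rw [h, Complex.exp_add, Complex.exp_add, Complex.exp_int_mul_two_pi_mul_I,
      Complex.exp_pi_mul_I]
    ring
  linear_combination key / 2

/-- key termwise identity, even case -/
lemma key_even (σ : ℂ) (x y : ℝ) (j k : ℤ) :
    tc1 σ x (j + k) * tc1 σ y (j - k) = tc1 (2*σ) (x+y) j * tc0 (2*σ) (x-y) k := by
  unfold tc1 tc0
  rw [← Complex.exp_add, ← Complex.exp_add]
  congr 1
  push_cast
  ring

/-- key termwise identity, odd case -/
lemma key_odd (σ : ℂ) (x y : ℝ) (j k : ℤ) :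
    tc1 σ x (j + k) * tc1 σ y (j - k - 1) = tc0 (2*σ) (x+y) j * tc1 (2*σ) (x-y) k := by
  unfold tc1 tc0
  rw [← Complex.exp_add, ← Complex.exp_add]
  congr 1
  push_cast
  ring

def evenSet : Set (ℤ × ℤ) := {p | Even (p.1 + p.2)}

def evenEquiv : ℤ × ℤ ≃ evenSet where
  toFun q := ⟨(q.1 + q.2, q.1 - q.2), ⟨q.1, by ring⟩⟩
  invFun p := ((p.1.1 + p.1.2) / 2, (p.1.1 - p.1.2) / 2)
  left_inv q := by
    obtain ⟨a, b⟩ := q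
    refine Prod.ext ?_ ?_ <;> dsimp only <;> omega
  right_inv p := by
    obtain ⟨⟨a, b⟩, ⟨r, hr⟩⟩ := p
    refine Subtype.ext (Prod.ext ?_ ?_) <;> dsimp only <;> omega

def oddEquiv : ℤ × ℤ ≃ (evenSetᶜ : Set (ℤ × ℤ)) where
  toFun q := ⟨(q.1 + q.2, q.1 - q.2 - 1), by
    simp only [Set.mem_compl_iff, evenSet, Set.mem_setOf_eq]
    rintro ⟨r, hr⟩; omega⟩
  invFun p := ((p.1.1 + p.1.2 + 1) / 2, (p.1.1 - p.1.2 - 1) / 2)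
  left_inv q := by
    obtain ⟨a, b⟩ := q
    refine Prod.ext ?_ ?_ <;> dsimp only <;> omega
  right_inv p := by
    obtain ⟨⟨a, b⟩, hp⟩ := p
    have h2 : ¬ Even (a + b) := hp
    rw [Int.not_even_iff_odd] at h2
    obtain ⟨r, hr⟩ := h2
    refine Subtype.ext (Prod.ext ?_ ?_) <;> dsimp only <;> omega

/-- product of two summable ℤ-indexed sums as a double sum -/
lemma hasSum_mul {f g : ℤ → ℂ} (hf : Summable f) (hg : Summable g) :
    HasSum (fun q : ℤ × ℤ => f q.1 * g q.2) ((∑' n : ℤ, f n) * (∑' n : ℤ, g n)) := by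
  have hf' := summable_norm_iff.mpr hf
  have hg' := summable_norm_iff.mpr hg
  have h := (summable_mul_of_summable_norm hf' hg').hasSum
  rwa [← tsum_mul_tsum_of_summable_norm hf' hg'] at h

/-- The product formula. -/
lemma prod_formula (τ : ℂ) (hτ : 0 < τ.im) (x y s t : ℝ)
    (hs : x + y = s) (ht : x - y = t) :
    thetaChar 1 x 0 τ * thetaChar 1 y 0 τ =
      thetaChar 1 s 0 (2*τ) * thetaChar 0 t 0 (2*τ)
        + thetaChar 0 s 0 (2*τ) * thetaChar 1 t 0 (2*τ) := by
  subst hs ht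
  have h2τ : 0 < (2*τ).im := by
    rw [Complex.mul_im]
    simp
    linarith
  have hE0 : HasSum (fun q : ℤ × ℤ => tc1 (2*τ) (x+y) q.1 * tc0 (2*τ) (x-y) q.2)
      ((∑' n : ℤ, tc1 (2*τ) (x+y) n) * (∑' n : ℤ, tc0 (2*τ) (x-y) n)) :=
    hasSum_mul (summable_tc1 h2τ (x+y)) (summable_tc0 h2τ (x-y))
  have hO0 : HasSum (fun q : ℤ × ℤ => tc0 (2*τ) (x+y) q.1 * tc1 (2*τ) (x-y) q.2)
      ((∑' n : ℤ, tc0 (2*τ) (x+y) n) * (∑' n : ℤ, tc1 (2*τ) (x-y) n)) :=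
    hasSum_mul (summable_tc0 h2τ (x+y)) (summable_tc1 h2τ (x-y))
  have hfunE : (fun q : ℤ × ℤ => tc1 (2*τ) (x+y) q.1 * tc0 (2*τ) (x-y) q.2)
      = ((fun q : ℤ × ℤ => tc1 τ x q.1 * tc1 τ y q.2) ∘ ((↑) : evenSet → ℤ × ℤ))
        ∘ evenEquiv := by
    funext q
    have hq : ((evenEquiv q : evenSet) : ℤ × ℤ) = (q.1 + q.2, q.1 - q.2) := rfl
    simp only [Function.comp_apply, hq]
    exact (key_even τ x y q.1 q.2).symm
  have hfunO : (fun q : ℤ × ℤ => tc0 (2*τ) (x+y) q.1 * tc1 (2*τ) (x-y) q.2)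
      = ((fun q : ℤ × ℤ => tc1 τ x q.1 * tc1 τ y q.2) ∘ ((↑) : (evenSetᶜ : Set (ℤ × ℤ)) → ℤ × ℤ))
        ∘ oddEquiv := by
    funext q
    have hq : ((oddEquiv q : (evenSetᶜ : Set (ℤ × ℤ))) : ℤ × ℤ) = (q.1 + q.2, q.1 - q.2 - 1) :=
      rfl
    simp only [Function.comp_apply, hq]
    exact (key_odd τ x y q.1 q.2).symm
  rw [hfunE] at hE0
  rw [hfunO] at hO0
  have hE := (Equiv.hasSum_iff evenEquiv).mp hE0
  have hO := (Equiv.hasSum_iff oddEquiv).mp hO0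
  have hL : HasSum (fun q : ℤ × ℤ => tc1 τ x q.1 * tc1 τ y q.2)
      ((∑' n : ℤ, tc1 τ x n) * (∑' n : ℤ, tc1 τ y n)) :=
    hasSum_mul (summable_tc1 hτ x) (summable_tc1 hτ y)
  have hR := hE.add_compl hO
  rw [thetaChar1_eq τ x, thetaChar1_eq τ y, thetaChar1_eq (2*τ), thetaChar1_eq (2*τ),
    thetaChar0_eq (2*τ), thetaChar0_eq (2*τ)]
  exact hL.unique hR

end ThetaAux

open ThetaAux in
theorem theta_constant_identity_two (τ : ℂ) (hτ : 0 < τ.im) :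
    thetaChar 1 0 0 τ ^ 2 * thetaChar 1 (1/4) 0 τ * thetaChar 1 (3/4) 0 τ
      - thetaChar 1 (1/4) 0 τ ^ 2 * thetaChar 1 (1/2) 0 τ ^ 2
      + thetaChar 1 (1/2) 0 τ ^ 2 * thetaChar 1 (3/4) 0 τ ^ 2 = 0 := by
  have h1 := prod_formula τ hτ 0 0 0 0 (by norm_num) (by norm_num)
  have h2 := prod_formula τ hτ (1/4) (3/4) 1 (-(1/2)) (by norm_num) (by norm_num)
  have h3 := prod_formula τ hτ (1/2) (1/2) 1 0 (by norm_num) (by norm_num)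
  have h4 := prod_formula τ hτ (1/4) (1/4) (1/2) 0 (by norm_num) (by norm_num)
  have h5 := prod_formula τ hτ (3/4) (3/4) (3/2) 0 (by norm_num) (by norm_num)
  have hF1 : thetaChar 1 1 0 (2*τ) = 0 := theta1_one (2*τ)
  have hFm : thetaChar 1 (-(1/2)) 0 (2*τ) = thetaChar 1 (1/2) 0 (2*τ) := theta1_neg (2*τ) (1/2)
  have hGm : thetaChar 0 (-(1/2)) 0 (2*τ) = thetaChar 0 (1/2) 0 (2*τ) := theta0_neg (2*τ) (1/2)
  have e32 : (3/2 : ℝ) = -(1/2) + 2 := by norm_num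
  have hF32 : thetaChar 1 (3/2) 0 (2*τ) = -thetaChar 1 (1/2) 0 (2*τ) := by
    rw [e32, theta1_add_two, hFm]
  have hG32 : thetaChar 0 (3/2) 0 (2*τ) = thetaChar 0 (1/2) 0 (2*τ) := by
    rw [e32, theta0_add_two, hGm]
  rw [hF1, hFm, hGm] at h2
  rw [hF1] at h3
  rw [hF32, hG32] at h5
  linear_combination
    (thetaChar 1 (1/4) 0 τ * thetaChar 1 (3/4) 0 τ) * h1
    + (thetaChar 1 0 0 (2*τ) * thetaChar 0 0 0 (2*τ)
        + thetaChar 0 0 0 (2*τ) * thetaChar 1 0 0 (2*τ)) * h2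
    - (thetaChar 1 (1/2) 0 τ * thetaChar 1 (1/2) 0 τ) * h4
    + (thetaChar 1 (1/2) 0 τ * thetaChar 1 (1/2) 0 τ) * h5
    - (2 * thetaChar 1 (1/2) 0 (2*τ) * thetaChar 0 0 0 (2*τ)) * h3
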